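/- For integers 0 ≤ k ≤ n, sum over l from 0 to n of C(n+1, l+1) * Binom(-1/2, l-k) equals (2n+1)!! / (2^(n-k) * (n-k)! * (2k+1)!!), where Binom(-1/2, j) denotes the generalized binomial coefficient (taken to be 0 for j < 0). -/

import Mathlib

/-!
Terms with `l < k` vanish. Writing `n = k + m` and `l = k + i`, symmetry gives
`C(n+1, k+i+1) = C(n+1, m-i)`, so the sum is the Chu–Vandermonde convolution
`∑ᵢ Binom(-1/2, i) C(n+1, m-i) = Binom(n + 1/2, m)`. Its numerator
`(n + 1/2)(n - 1/2)⋯(k + 3/2)` equals `(2n+1)!! / (2^m (2k+1)!!)`.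
-/

/-- The generalized binomial coefficient `Binom(x, j)` for `x : ℚ` and `j : ℤ`,
equal to `x(x-1)⋯(x-j+1)/j!` for `j ≥ 0` and `0` for `j < 0`. -/
noncomputable def genBinom (x : ℚ) (j : ℤ) : ℚ :=
  if j < 0 then 0
  else (∏ i ∈ Finset.range j.toNat, (x - (i : ℚ))) / (Nat.factorial j.toNat : ℚ)

open Finset Polynomial

section Field

variable {K : Type*} [Field K] [CharZero K]

theorem Ring.choose_eq_prod_range_div (x : K) (m : ℕ) :
    Ring.choose x m = (∏ i ∈ range m, (x - i)) / m.factorial := by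
  rw [Ring.choose_eq_smul, ← aeval_eq_smeval, aeval_def, eval₂_eq_eval_map, descPochhammer_map,
    descPochhammer_eval_eq_prod_range, smul_eq_mul, inv_mul_eq_div]

theorem two_pow_mul_doubleFactorial_mul_prod_range_add_half (k m : ℕ) :
    2 ^ m * ((2 * k + 1).doubleFactorial : K) * ∏ i ∈ range m, ((k + m : ℕ) + 1 / 2 - i : K)
      = (2 * (k + m) + 1).doubleFactorial := by
  induction m with
  | zero => simp
  | succ m ih =>
    rw [prod_range_succ', ← add_assoc, show 2 * (k + m + 1) + 1 = 2 * (k + m) + 1 + 2 by ring,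
      Nat.doubleFactorial_add_two, Nat.cast_mul, ← ih]
    push_cast
    simp_rw [show ∀ i : K, (k + m + 1 : K) + 1 / 2 - (i + 1) = k + m + 1 / 2 - i by intro; ring]
    ring

theorem Ring.choose_natCast_add_half (k m : ℕ) :
    Ring.choose ((k + m : ℕ) + 1 / 2 : K) m
      = (2 * (k + m) + 1).doubleFactorial / (2 ^ m * m.factorial * (2 * k + 1).doubleFactorial) := by
  have : ((2 * k + 1).doubleFactorial : K) ≠ 0 := Nat.cast_ne_zero.2 (Nat.doubleFactorial_pos _).ne'
  rw [Ring.choose_eq_prod_range_div, ← two_pow_mul_doubleFactorial_mul_prod_range_add_half k m]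
  field_simp

end Field

theorem genBinom_natCast (x : ℚ) (m : ℕ) : genBinom x m = Ring.choose x m := by
  simp [genBinom, Ring.choose_eq_prod_range_div]

theorem genBinom_of_neg (x : ℚ) {j : ℤ} (hj : j < 0) : genBinom x j = 0 := if_pos hj

theorem sum_choose_succ_mul_genBinom_sub (x : ℚ) (k m : ℕ) :
    ∑ l ∈ range (k + m + 1), ((k + m + 1).choose (l + 1) : ℚ) * genBinom x (l - k)
      = Ring.choose (x + (k + m + 1 : ℕ)) m := by
  have hlow : ∀ l ∈ range k, ((k + m + 1).choose (l + 1) : ℚ) * genBinom x (l - k) = 0 :=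
    fun l hl => by rw [genBinom_of_neg x (by simp at hl; omega), mul_zero]
  have hhigh : ∀ i ∈ range (m + 1),
      ((k + m + 1).choose (k + i + 1) : ℚ) * genBinom x ((k + i : ℕ) - k)
        = Ring.choose x i * (k + m + 1).choose (m - i) := fun i hi => by
    have hi : i ≤ m := Nat.lt_succ_iff.mp (mem_range.mp hi)
    rw [show ((k + i : ℕ) : ℤ) - k = i by push_cast; ring, genBinom_natCast, mul_comm,
      ← Nat.choose_symm (by omega), show k + m + 1 - (k + i + 1) = m - i by omega]
  rw [show range (k + m + 1) = range (k + (m + 1)) by rw [add_assoc], sum_range_add,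
    sum_eq_zero hlow, zero_add, sum_congr rfl hhigh, Ring.add_choose_eq _ (Commute.all _ _),
    Nat.sum_antidiagonal_eq_sum_range_succ (fun i j => Ring.choose x i * Ring.choose _ j)]
  simp_rw [Ring.choose_natCast]

/-- For integers `0 ≤ k ≤ n`,
`∑_{l=0}^{n} C(n+1, l+1) Binom(-1/2, l-k) = (2n+1)!! / (2^(n-k) (n-k)! (2k+1)!!)`. -/
theorem sum_choose_genBinom (n k : ℕ) (hk : k ≤ n) :
    (∑ l ∈ Finset.range (n + 1),
        (Nat.choose (n + 1) (l + 1) : ℚ) * genBinom (-1 / 2) ((l : ℤ) - (k : ℤ)))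
      = (Nat.doubleFactorial (2 * n + 1) : ℚ) /
          (2 ^ (n - k) * (Nat.factorial (n - k) : ℚ) *
            (Nat.doubleFactorial (2 * k + 1) : ℚ)) := by
  obtain ⟨m, rfl⟩ := Nat.exists_eq_add_of_le hk
  rw [sum_choose_succ_mul_genBinom_sub, Nat.add_sub_cancel_left, ← Ring.choose_natCast_add_half]
  congr 1
  push_cast
  ring
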